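/- Strengthened Löb's Rule for □• over CHL: if ⋀_{i<n} □•ψ_i ∧ ⋀_{j<m} ⊡•χ_j ⊢_CHL □φ → φ, then ⋀_{i<n} □•ψ_i ∧ ⋀_{j<m} ⊡•χ_j ⊢_CHL φ. -/

import Mathlib

/-!
Cyclic syntax for Cyclic Henkin Logic (Visser, "Cyclic Henkin Logic").

A graph is a directed pointed labeled graph with ordered successors;
formulas of the cyclic modal language `𝕃°` are such graphs over the
modal labels, whose box-occurrences guard all cycles.
-/


theorem finite_option {α : Type} (h : Finite α) : Finite (Option α) := by
  haveI := h
  haveI : Fintype α := Fintype.ofFinite _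
  exact Finite.of_fintype _

/-- Directed pointed labeled graphs with ordered successors over a label
set `L` with arity function `ar`.  The vertex set is finite. -/
structure RGraph (L : Type) (ar : L → ℕ) : Type 1 where
  V : Type
  fin : Finite V
  root : V
  label : V → L
  succ : (a : V) → Fin (ar (label a)) → V

namespace RGraph

variable {L : Type} {ar : L → ℕ}

/-- The edge relation `a Ŝ b`. -/
def Edge (G : RGraph L ar) (a b : G.V) : Prop := ∃ i, G.succ a i = b

/-- Every vertex is reachable from the root by a finite path. -/
def Reachable (G : RGraph L ar) : Prop :=
  ∀ a, Relation.ReflTransGen G.Edge G.root a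

/-- `C` is a cycle: its elements can be arranged in a closed path of
pairwise distinct vertices. -/
def IsCycle (G : RGraph L ar) (C : Set G.V) : Prop :=
  ∃ (k : ℕ) (f : Fin (k + 1) → G.V), Function.Injective f ∧ Set.range f = C ∧
    (∀ i : Fin k, G.Edge (f i.castSucc) (f i.succ)) ∧ G.Edge (f (Fin.last k)) (f 0)

/-- A guard: a set of vertices meeting every cycle. -/
def IsGuard (G : RGraph L ar) (W : Set G.V) : Prop :=
  ∀ C, G.IsCycle C → (C ∩ W).Nonempty

/-- The number of cycles `c(G)`. -/
noncomputable def numCycles (G : RGraph L ar) : ℕ :=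
  Set.ncard {C : Set G.V | G.IsCycle C}

/-- A vertex on a cycle. -/
def OnCycle (G : RGraph L ar) (a : G.V) : Prop := ∃ C, G.IsCycle C ∧ a ∈ C

/-- The root is a cycle vertex. -/
def RootOnCycle (G : RGraph L ar) : Prop := G.OnCycle G.root

/-- Acyclic graphs. -/
def Acyclic (G : RGraph L ar) : Prop := ∀ C, ¬ G.IsCycle C

/-- Bisimulations between graphs. -/
def IsBisim (G G' : RGraph L ar) (R : G.V → G'.V → Prop) : Prop :=
  ∀ a a', R a a' → ∃ h : G.label a = G'.label a',
    ∀ i : Fin (ar (G.label a)),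
      R (G.succ a i) (G'.succ a' (Fin.cast (congrArg ar h) i))

/-- Bisimilarity `G ≃ G'`: some bisimulation relates the roots. -/
def Bisim (G G' : RGraph L ar) : Prop :=
  ∃ R, G.IsBisim G' R ∧ R G.root G'.root

/-- Isomorphism `G ≅ G'`: a bijective bisimulation relating the roots. -/
def Iso (G G' : RGraph L ar) : Prop :=
  ∃ e : G.V ≃ G'.V, G.IsBisim G' (fun a b => e a = b) ∧ e G.root = G'.root

end RGraph

/-- Labels for the cyclic modal language `𝕃°`. -/
inductive FLab : Type
  | top | bot | var (n : ℕ) | neg | box | and | or | imp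
deriving DecidableEq

/-- Arities of the labels. -/
@[reducible] def FLab.ar : FLab → ℕ
  | .top => 0 | .bot => 0 | .var _ => 0
  | .neg => 1 | .box => 1
  | .and => 2 | .or => 2 | .imp => 2

/-- Raw formulas of `𝕃°`: graphs over the modal labels. -/
abbrev Fm := RGraph FLab FLab.ar

namespace Fm

/-- `p` occurs in `φ`. -/
def Occurs (φ : Fm) (p : ℕ) : Prop := ∃ a, φ.label a = .var p

/-- The set `bo(φ)` of box-occurrences. -/
def boOcc (φ : Fm) : Set φ.V := {a | φ.label a = .box}

/-- The guard condition: every cycle contains a box-occurrence. -/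
def Guarded (φ : Fm) : Prop := φ.IsGuard φ.boOcc

/-- `φ` is a formula: a (rooted, reachable) graph whose box-occurrences
form a guard. -/
def WF (φ : Fm) : Prop := φ.Reachable ∧ φ.Guarded

/-- An edge leaving a non-box vertex. -/
def EdgeNB (φ : Fm) (a b : φ.V) : Prop := φ.Edge a b ∧ φ.label a ≠ .box

/-- `φ` is modalised in `p`: every path from the root to a `p`-occurrence
passes through a box-occurrence. -/
def Modalised (φ : Fm) (p : ℕ) : Prop :=
  ∀ a, Relation.ReflTransGen φ.EdgeNB φ.root a → φ.label a ≠ .var p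

theorem Modalised.root_ne {φ : Fm} {p : ℕ} (h : φ.Modalised p) :
    φ.label φ.root ≠ .var p :=
  h φ.root Relation.ReflTransGen.refl

/-! ### Operations on formulas -/

/-- One-point graph with a 0-ary label. -/
def ofLab0 (l : FLab) : Fm where
  V := PUnit
  fin := inferInstance
  root := .unit
  label := fun _ => l
  succ := fun _ _ => .unit

def topFm : Fm := ofLab0 .top
def botFm : Fm := ofLab0 .bot
def varFm (n : ℕ) : Fm := ofLab0 (.var n)

def lab1 (l : FLab) (φ : Fm) : Option φ.V → FLab
  | none => l
  | some a => φ.label a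

/-- Add a fresh root with 1-ary label `l` above `φ`. -/
def ofLab1 (l : FLab) (φ : Fm) : Fm where
  V := Option φ.V
  fin := finite_option φ.fin
  root := none
  label := lab1 l φ
  succ := fun a => match a with
    | none => fun _ => some φ.root
    | some b => fun i => some (φ.succ b i)

def neg (φ : Fm) : Fm := ofLab1 .neg φ
def box (φ : Fm) : Fm := ofLab1 .box φ

def lab2 (l : FLab) (φ ψ : Fm) : Option (φ.V ⊕ ψ.V) → FLab
  | none => l
  | some (.inl a) => φ.label a
  | some (.inr b) => ψ.label b

/-- Add a fresh root with 2-ary label `l` above the disjoint sum of `φ`, `ψ`. -/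
def ofLab2 (l : FLab) (φ ψ : Fm) : Fm where
  V := Option (φ.V ⊕ ψ.V)
  fin := finite_option (by haveI := φ.fin; haveI := ψ.fin; exact inferInstance)
  root := none
  label := lab2 l φ ψ
  succ := fun a => match a with
    | none => fun i => if (i : ℕ) = 0 then some (.inl φ.root) else some (.inr ψ.root)
    | some (.inl a) => fun i => some (.inl (φ.succ a i))
    | some (.inr b) => fun i => some (.inr (ψ.succ b i))

def and (φ ψ : Fm) : Fm := ofLab2 .and φ ψ
def or (φ ψ : Fm) : Fm := ofLab2 .or φ ψ
def imp (φ ψ : Fm) : Fm := ofLab2 .imp φ ψ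

/-- `φ ↔ ψ` as `(φ→ψ) ∧ (ψ→φ)`. -/
def iff (φ ψ : Fm) : Fm := Fm.and (Fm.imp φ ψ) (Fm.imp ψ φ)

/-- The fixed point `Ϝp.φ`: identify the root with all `p`-occurrences,
keeping the label of the root.  (The root is not a `p`-occurrence, e.g.
because `φ` is modalised in `p`.) -/
def fix (φ : Fm) (p : ℕ) (h : φ.label φ.root ≠ .var p) : Fm where
  V := {a : φ.V // φ.label a ≠ .var p}
  fin := by haveI := φ.fin; exact inferInstance
  root := ⟨φ.root, h⟩
  label := fun a => φ.label a.1
  succ := fun a i =>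
    if hb : φ.label (φ.succ a.1 i) = .var p then ⟨φ.root, h⟩
    else ⟨φ.succ a.1 i, hb⟩

/-! ### Substitution -/

def varIdx : FLab → Option ℕ
  | .var q => some q
  | _ => none

/-- The copy of `σ q` hanging at a `q`-occurrence. -/
def copyT (σ : ℕ → Fm) : Option ℕ → Type
  | some q => (σ q).V
  | none => PUnit

theorem copyT_finite (σ : ℕ → Fm) : ∀ o, Finite (copyT σ o)
  | some q => (σ q).fin
  | none => show Finite PUnit from inferInstance

def copyRoot (σ : ℕ → Fm) : ∀ o, copyT σ o
  | some q => (σ q).root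
  | none => .unit

def copyLabel (σ : ℕ → Fm) (d : FLab) : ∀ o, copyT σ o → FLab
  | some q, b => (σ q).label b
  | none, _ => d

/-- Vertices of the substitution `φσ`. -/
def SubV (φ : Fm) (σ : ℕ → Fm) : Type :=
  Σ a : φ.V, copyT σ (varIdx (φ.label a))

def substSucc (φ : Fm) (σ : ℕ → Fm) (a : φ.V) :
    ∀ (o : Option ℕ), o = varIdx (φ.label a) → ∀ b : copyT σ o,
      Fin (copyLabel σ (φ.label a) o b).ar → SubV φ σ
  | some q, h, b, i => ⟨a, cast (congrArg (copyT σ) h) ((σ q).succ b i)⟩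
  | none, _, _, i => ⟨φ.succ a i, copyRoot σ _⟩

/-- Simultaneous substitution: every `q`-occurrence of `φ` is identified
with the root of a disjoint copy of `σ q`, keeping the label of the root
of `σ q`. -/
def subst (φ : Fm) (σ : ℕ → Fm) : Fm where
  V := SubV φ σ
  fin := by
    haveI := φ.fin
    haveI : ∀ a : φ.V, Finite (copyT σ (varIdx (φ.label a))) :=
      fun a => copyT_finite σ _
    exact (inferInstance : Finite (Σ a : φ.V, copyT σ (varIdx (φ.label a))))
  root := ⟨φ.root, copyRoot σ _⟩
  label := fun x => copyLabel σ (φ.label x.1) _ x.2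
  succ := fun x => substSucc φ σ x.1 _ rfl x.2

/-- Substitution of a single variable, `φ[p:ψ]`. -/
def subst1 (φ : Fm) (p : ℕ) (ψ : Fm) : Fm :=
  φ.subst (fun q => if q = p then ψ else varFm q)

/-! ### Snip -/

-- Redirect all incoming edges of the root to a new leaf labeled `p`.
open Classical in
noncomputable def snipC (φ : Fm) (p : ℕ) : Fm where
  V := Option φ.V
  fin := finite_option φ.fin
  root := some φ.root
  label := lab1 (.var p) φ
  succ := fun a => match a with
    | none => Fin.elim0
    | some a => fun i =>
        if φ.succ a i = φ.root then none else some (φ.succ a i)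

-- `snip(φ,p)`: if the root is on a cycle, redirect all incoming edges
-- of the root to a new leaf labeled `p`; otherwise `φ` itself.
open Classical in
noncomputable def snip (φ : Fm) (p : ℕ) : Fm :=
  if φ.RootOnCycle then φ.snipC p else φ

/-- `snip(φ,ψ) := snip(φ,p)[p:ψ]` (for a variable `p` not occurring in `φ`). -/
noncomputable def snipF (φ : Fm) (p : ℕ) (ψ : Fm) : Fm :=
  (φ.snip p).subst1 p ψ

theorem snip_root_ne {φ : Fm} {p : ℕ} (h : φ.RootOnCycle) (hp : ¬ φ.Occurs p) :
    (φ.snip p).label (φ.snip p).root ≠ .var p := by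
  rw [snip, if_pos h]
  exact fun hc => hp ⟨φ.root, hc⟩

/-! ### The transitive closure modality `□•φ := Ϝp.□(φ∧p)` -/

def bslab (φ : Fm) : Option (Option φ.V) → FLab
  | none => .box
  | some none => .and
  | some (some a) => φ.label a

/-- `□•φ := Ϝp.□(φ∧p)`, for `p` not occurring in `φ`: a box-root whose
`∧`-successor returns to the box-root. -/
def boxStar (φ : Fm) : Fm where
  V := Option (Option φ.V)
  fin := finite_option (finite_option φ.fin)
  root := none
  label := bslab φ
  succ := fun a => match a with
    | none => fun _ => some none
    | some none => fun i => if (i : ℕ) = 0 then some (some φ.root) else none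
    | some (some a) => fun i => some (some (φ.succ a i))

/-- `⊡•φ := φ ∧ □•φ`. -/
def boxDotStar (φ : Fm) : Fm := Fm.and φ (boxStar φ)

/-- Finite conjunctions. -/
def bigAnd : List Fm → Fm
  | [] => topFm
  | φ :: l => Fm.and φ (bigAnd l)

/-- Apply a label, as a connective, to arguments. -/
def applyLab : (l : FLab) → (Fin l.ar → Fm) → Fm
  | .top, _ => topFm
  | .bot, _ => botFm
  | .var n, _ => varFm n
  | .neg, f => neg (f 0)
  | .box, f => box (f 0)
  | .and, f => Fm.and (f 0) (f 1)
  | .or, f => Fm.or (f 0) (f 1)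
  | .imp, f => Fm.imp (f 0) (f 1)

/-- First successor (defaulting to `a` itself at leaves). -/
def succ0 (φ : Fm) (a : φ.V) : φ.V :=
  if h : 0 < (φ.label a).ar then φ.succ a ⟨0, h⟩ else a

/-- The subgraph of `φ` generated by `a`. -/
def restrict (φ : Fm) (a : φ.V) : Fm where
  V := {b : φ.V // Relation.ReflTransGen φ.Edge a b}
  fin := by haveI := φ.fin; exact inferInstance
  root := ⟨a, Relation.ReflTransGen.refl⟩
  label := fun b => φ.label b.1
  succ := fun b i => ⟨φ.succ b.1 i, b.2.tail ⟨i, rfl⟩⟩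

/-- A variable not occurring in `φ`. -/
noncomputable def freshVar (φ : Fm) : ℕ := by
  classical
  haveI := φ.fin
  haveI : Fintype φ.V := Fintype.ofFinite _
  exact Finset.univ.sup fun a => match φ.label a with | .var q => q + 1 | _ => 0

/-- `snip(φ,⊤)`. -/
noncomputable def snipTop (φ : Fm) : Fm := φ.snipF φ.freshVar topFm

/-- The list of box-occurrences of `φ`. -/
noncomputable def boxOccList (φ : Fm) : List φ.V := by
  classical
  haveI := φ.fin
  haveI : Fintype φ.V := Fintype.ofFinite _
  exact (Finset.univ.filter fun a => φ.label a = FLab.box).toList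

end Fm

/-! ### Propositional tautologies (as parse trees) -/

inductive PForm : Type
  | var (n : ℕ) | top | bot
  | neg (A : PForm) | and (A B : PForm) | or (A B : PForm) | imp (A B : PForm)

def PForm.eval (v : ℕ → Bool) : PForm → Bool
  | .var n => v n
  | .top => true
  | .bot => false
  | .neg A => !A.eval v
  | .and A B => A.eval v && B.eval v
  | .or A B => A.eval v || B.eval v
  | .imp A B => !A.eval v || B.eval v

/-- Propositional tautology. -/
def PForm.Taut (A : PForm) : Prop := ∀ v, A.eval v = true

/-- Substitution instance of a parse tree by formulas of `𝕃°`. -/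
def PForm.substFm (σ : ℕ → Fm) : PForm → Fm
  | .var n => σ n
  | .top => Fm.topFm
  | .bot => Fm.botFm
  | .neg A => Fm.neg (A.substFm σ)
  | .and A B => Fm.and (A.substFm σ) (B.substFm σ)
  | .or A B => Fm.or (A.substFm σ) (B.substFm σ)
  | .imp A B => Fm.imp (A.substFm σ) (B.substFm σ)

/-! ### Cyclic Henkin Logic -/

/-- Cyclic Henkin Logic `CHL`: modus ponens, necessitation, substitution
instances of propositional tautologies, distribution, bisimilarity, and
Löb's Rule. -/
inductive CHL : Fm → Prop
  | mp {φ ψ : Fm} : CHL (Fm.imp φ ψ) → CHL φ → CHL ψ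
  | nec {φ : Fm} : CHL φ → CHL (Fm.box φ)
  | taut {A : PForm} (σ : ℕ → Fm) : A.Taut → CHL (A.substFm σ)
  | k (φ ψ : Fm) : CHL (Fm.imp (Fm.box (Fm.imp φ ψ)) (Fm.imp (Fm.box φ) (Fm.box ψ)))
  | bisim {φ ψ : Fm} : RGraph.Bisim φ ψ → CHL (Fm.iff φ ψ)
  | lob {φ : Fm} : CHL (Fm.imp (Fm.box φ) φ) → CHL φ

/-- `GL°`: `CHL` plus the axiom scheme `□φ → □□φ`. -/
inductive GLo : Fm → Prop
  | mp {φ ψ : Fm} : GLo (Fm.imp φ ψ) → GLo φ → GLo ψ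
  | nec {φ : Fm} : GLo φ → GLo (Fm.box φ)
  | taut {A : PForm} (σ : ℕ → Fm) : A.Taut → GLo (A.substFm σ)
  | k (φ ψ : Fm) : GLo (Fm.imp (Fm.box (Fm.imp φ ψ)) (Fm.imp (Fm.box φ) (Fm.box ψ)))
  | bisim {φ ψ : Fm} : RGraph.Bisim φ ψ → GLo (Fm.iff φ ψ)
  | lob {φ : Fm} : GLo (Fm.imp (Fm.box φ) φ) → GLo φ
  | four (φ : Fm) : GLo (Fm.imp (Fm.box φ) (Fm.box (Fm.box φ)))

/-- Löb's Logic `GL` on the acyclic formulas. -/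
inductive GLlogic : Fm → Prop
  | mp {φ ψ : Fm} : GLlogic (Fm.imp φ ψ) → GLlogic φ → GLlogic ψ
  | nec {φ : Fm} : GLlogic φ → GLlogic (Fm.box φ)
  | taut {A : PForm} (σ : ℕ → Fm) : (∀ q, (σ q).Acyclic) → A.Taut → GLlogic (A.substFm σ)
  | k (φ ψ : Fm) : φ.Acyclic → ψ.Acyclic →
      GLlogic (Fm.imp (Fm.box (Fm.imp φ ψ)) (Fm.imp (Fm.box φ) (Fm.box ψ)))
  | bisim {φ ψ : Fm} : φ.Acyclic → ψ.Acyclic → RGraph.Bisim φ ψ → GLlogic (Fm.iff φ ψ)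
  | lob {φ : Fm} : φ.Acyclic → GLlogic (Fm.imp (Fm.box φ) φ) → GLlogic φ
  | four (φ : Fm) : φ.Acyclic → GLlogic (Fm.imp (Fm.box φ) (Fm.box (Fm.box φ)))

/-! ### Systems of equations -/

/-- The system `ℰ` (given by `E` on the finite variable set `Q`) is
modalised: its dependency graph is acyclic. -/
def SysModalised (Q : Finset ℕ) (E : ℕ → Fm) : Prop :=
  ∀ q ∈ Q, ¬ Relation.TransGen
      (fun x y => x ∈ Q ∧ y ∈ Q ∧ ¬ (E x).Modalised y) q q

/-- The substitution determined by a solution candidate `F` on `Q`. -/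
def sysSubst (Q : Finset ℕ) (F : ℕ → Fm) : ℕ → Fm :=
  fun q => if q ∈ Q then F q else Fm.varFm q

/-- `F` solves the system `E` on `Q`. -/
def IsSolution (Q : Finset ℕ) (E : ℕ → Fm) (F : ℕ → Fm) : Prop :=
  (∀ q ∈ Q, (F q).WF) ∧
  (∀ q ∈ Q, ∀ q' ∈ Q, ¬ (F q).Occurs q') ∧
  (∀ q ∈ Q, RGraph.Bisim (F q) ((E q).subst (sysSubst Q F)))

/-! ### Local translations -/

/-- A local translation of the formula `φ` into the logic `Λ`. -/
def IsLocalTranslation (Λ : Fm → Prop) (φ : Fm) (T : φ.V → Fm) : Prop :=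
  ∀ a : φ.V, Λ (Fm.iff (T a) (Fm.applyLab (φ.label a) (fun i => T (φ.succ a i))))

-- Substitution determined by a finite assignment.
open Classical in
noncomputable def substOf {ι : Type} (s : ι → ℕ) (ψ : ι → Fm) : ℕ → Fm :=
  fun q => if h : ∃ i, s i = q then ψ h.choose else Fm.varFm q

/-- The characterising equations of the de Jongh–Sambin map `js*`,
defined by course-of-values recursion on the number of cycles and guard
recursion on the box-occurrences on a cycle. -/
def IsJsStar (jsS : (φ : Fm) → φ.V → Fm) : Prop :=
  (∀ (φ : Fm) (a : φ.V), ¬ (φ.label a = .box ∧ φ.OnCycle a) →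
      jsS φ a = Fm.applyLab (φ.label a) (fun i => jsS φ (φ.succ a i))) ∧
  (∀ (φ : Fm) (a : φ.V), φ.label a = .box → φ.OnCycle a →
      jsS φ a = jsS (Fm.snipTop (φ.restrict a)) (Fm.snipTop (φ.restrict a)).root) ∧
  (∀ (φ : Fm) (a : φ.V), (jsS φ a).Acyclic)

/-! ### Auxiliary machinery for the strengthened Löb rule -/

section StrengthenedLob

open Fm

private lemma chl_imp_trans {α β γ : Fm} (h1 : CHL (Fm.imp α β)) (h2 : CHL (Fm.imp β γ)) :
    CHL (Fm.imp α γ) := by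
  have t : PForm.Taut (.imp (.imp (.var 0) (.var 1))
      (.imp (.imp (.var 1) (.var 2)) (.imp (.var 0) (.var 2)))) := by
    intro v; simp only [PForm.eval]
    cases v 0 <;> cases v 1 <;> cases v 2 <;> rfl
  have := CHL.taut (fun q => if q = 0 then α else if q = 1 then β else γ) t
  exact (this.mp h1).mp h2

/-- The key bisimulation: `□•ψ ≃ □(ψ ∧ □•ψ)`. -/
private def embBS (ψ : Fm) : Option (Option ψ.V) →
    Option (Option (ψ.V ⊕ Option (Option ψ.V)))
  | none => none
  | some none => some none
  | some (some a) => some (some (Sum.inl a))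

private lemma bisim_boxStar (ψ : Fm) :
    RGraph.Bisim (Fm.boxStar ψ) (Fm.box (Fm.boxDotStar ψ)) := by
  refine ⟨fun x y => y = embBS ψ x ∨ y = some (some (Sum.inr x)), ?_, Or.inl rfl⟩
  rintro x y (rfl | rfl)
  · match x with
    | none => exact ⟨rfl, fun _ => Or.inl rfl⟩
    | some none =>
        refine ⟨rfl, fun i => ?_⟩
        by_cases hi : (i : ℕ) = 0
        · exact Or.inl (by
            show some (if (i : ℕ) = 0
                then (some (Sum.inl ψ.root) : Option (ψ.V ⊕ Option (Option ψ.V)))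
                else some (Sum.inr (none : Option (Option ψ.V))))
              = embBS ψ (if (i : ℕ) = 0 then some (some ψ.root) else none)
            simp [hi, embBS])
        · exact Or.inr (by
            show some (if (i : ℕ) = 0
                then (some (Sum.inl ψ.root) : Option (ψ.V ⊕ Option (Option ψ.V)))
                else some (Sum.inr (none : Option (Option ψ.V))))
              = some (some (Sum.inr (if (i : ℕ) = 0 then some (some ψ.root) else none)))
            simp [hi])
    | some (some a) => exact ⟨rfl, fun _ => Or.inl rfl⟩
  · exact ⟨rfl, fun _ => Or.inr rfl⟩

/-- `⊢ □•ψ → □⊡•ψ`. -/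
private lemma chl_boxStar_imp (ψ : Fm) :
    CHL (Fm.imp (Fm.boxStar ψ) (Fm.box (Fm.boxDotStar ψ))) := by
  have hb := CHL.bisim (bisim_boxStar ψ)
  have t : PForm.Taut (.imp (.and (.var 0) (.var 1)) (.var 0)) := by
    intro v; simp only [PForm.eval]; cases v 0 <;> cases v 1 <;> rfl
  exact (CHL.taut (fun q => if q = 0 then
      Fm.imp (Fm.boxStar ψ) (Fm.box (Fm.boxDotStar ψ))
    else Fm.imp (Fm.box (Fm.boxDotStar ψ)) (Fm.boxStar ψ)) t).mp hb

/-- `⊢ ⊡•ψ → □•ψ` (right conjunct). -/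
private lemma chl_bds_imp_bs (ψ : Fm) :
    CHL (Fm.imp (Fm.boxDotStar ψ) (Fm.boxStar ψ)) := by
  have t : PForm.Taut (.imp (.and (.var 0) (.var 1)) (.var 1)) := by
    intro v; simp only [PForm.eval]; cases v 0 <;> cases v 1 <;> rfl
  exact CHL.taut (fun q => if q = 0 then ψ else Fm.boxStar ψ) t

/-- `γ` implies its own box. -/
private def Selfbox (γ : Fm) : Prop := CHL (Fm.imp γ (Fm.box γ))

private lemma selfbox_boxStar (ψ : Fm) : Selfbox (Fm.boxStar ψ) := by
  have h2 : CHL (Fm.imp (Fm.box (Fm.boxDotStar ψ)) (Fm.box (Fm.boxStar ψ))) :=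
    (CHL.k (Fm.boxDotStar ψ) (Fm.boxStar ψ)).mp (CHL.nec (chl_bds_imp_bs ψ))
  exact chl_imp_trans (chl_boxStar_imp ψ) h2

private lemma selfbox_boxDotStar (ψ : Fm) : Selfbox (Fm.boxDotStar ψ) := by
  have h2 : CHL (Fm.imp (Fm.box (Fm.boxDotStar ψ)) (Fm.box (Fm.boxDotStar ψ))) := by
    have t : PForm.Taut (.imp (.var 0) (.var 0)) := by
      intro v; simp only [PForm.eval]; cases v 0 <;> rfl
    exact CHL.taut (fun _ => Fm.box (Fm.boxDotStar ψ)) t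
  exact chl_imp_trans (chl_bds_imp_bs ψ) (chl_boxStar_imp ψ)

private lemma chl_box_pair (α β : Fm) :
    CHL (Fm.imp (Fm.box α) (Fm.imp (Fm.box β) (Fm.box (Fm.and α β)))) := by
  have t : PForm.Taut (.imp (.var 0) (.imp (.var 1) (.and (.var 0) (.var 1)))) := by
    intro v; simp only [PForm.eval]; cases v 0 <;> cases v 1 <;> rfl
  have h1 : CHL (Fm.imp α (Fm.imp β (Fm.and α β))) :=
    CHL.taut (fun q => if q = 0 then α else β) t
  have h2 : CHL (Fm.imp (Fm.box α) (Fm.box (Fm.imp β (Fm.and α β)))) :=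
    (CHL.k α (Fm.imp β (Fm.and α β))).mp (CHL.nec h1)
  exact chl_imp_trans h2 (CHL.k β (Fm.and α β))

private lemma selfbox_top : Selfbox Fm.topFm := by
  have ht : CHL Fm.topFm := CHL.taut (A := .top) (fun _ => Fm.topFm) (fun _ => rfl)
  have t : PForm.Taut (.imp (.var 0) (.imp (.var 1) (.var 0))) := by
    intro v; simp only [PForm.eval]; cases v 0 <;> cases v 1 <;> rfl
  exact (CHL.taut (fun q => if q = 0 then Fm.box Fm.topFm else Fm.topFm) t).mp (CHL.nec ht)

private lemma selfbox_and {α β : Fm} (ha : Selfbox α) (hb : Selfbox β) :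
    Selfbox (Fm.and α β) := by
  have t : PForm.Taut (.imp (.imp (.var 0) (.var 1))
      (.imp (.imp (.var 2) (.var 3))
        (.imp (.imp (.var 1) (.imp (.var 3) (.var 4)))
          (.imp (.and (.var 0) (.var 2)) (.var 4))))) := by
    intro v; simp only [PForm.eval]
    cases v 0 <;> cases v 1 <;> cases v 2 <;> cases v 3 <;> cases v 4 <;> rfl
  have := CHL.taut (fun q =>
    if q = 0 then α else if q = 1 then Fm.box α else if q = 2 then β
    else if q = 3 then Fm.box β else Fm.box (Fm.and α β)) t
  exact ((this.mp ha).mp hb).mp (chl_box_pair α β)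

private lemma selfbox_bigAnd (l : List Fm) (h : ∀ γ ∈ l, Selfbox γ) :
    Selfbox (Fm.bigAnd l) := by
  induction l with
  | nil => exact selfbox_top
  | cons γ l ih =>
      exact selfbox_and (h γ List.mem_cons_self)
        (ih fun δ hδ => h δ (List.mem_cons_of_mem γ hδ))

end StrengthenedLob

/-- **Strengthened Löb's Rule** for `□•` over `CHL` (Corollary `cora`):
if `⋀_{i<n} □•ψ_i ∧ ⋀_{j<m} ⊡•χ_j ⊢_CHL □φ → φ`, then
`⋀_{i<n} □•ψ_i ∧ ⋀_{j<m} ⊡•χ_j ⊢_CHL φ`. -/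
theorem strengthened_lob (n m : ℕ) (ψ : Fin n → Fm) (χ : Fin m → Fm) (φ : Fm)
    (hψ : ∀ i, (ψ i).WF) (hχ : ∀ j, (χ j).WF) (hφ : φ.WF)
    (h : CHL (Fm.imp
        (Fm.and (Fm.bigAnd (List.ofFn fun i => Fm.boxStar (ψ i)))
                (Fm.bigAnd (List.ofFn fun j => Fm.boxDotStar (χ j))))
        (Fm.imp (Fm.box φ) φ))) :
    CHL (Fm.imp
        (Fm.and (Fm.bigAnd (List.ofFn fun i => Fm.boxStar (ψ i)))
                (Fm.bigAnd (List.ofFn fun j => Fm.boxDotStar (χ j))))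
        φ) := by
  set A := Fm.and (Fm.bigAnd (List.ofFn fun i => Fm.boxStar (ψ i)))
      (Fm.bigAnd (List.ofFn fun j => Fm.boxDotStar (χ j))) with hA
  have sb : Selfbox A := by
    apply selfbox_and
    · apply selfbox_bigAnd
      intro γ hγ
      obtain ⟨i, rfl⟩ := List.mem_ofFn.mp hγ
      exact selfbox_boxStar _
    · apply selfbox_bigAnd
      intro γ hγ
      obtain ⟨j, rfl⟩ := List.mem_ofFn.mp hγ
      exact selfbox_boxDotStar _
  apply CHL.lob
  have hk : CHL (Fm.imp (Fm.box (Fm.imp A φ)) (Fm.imp (Fm.box A) (Fm.box φ))) :=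
    CHL.k A φ
  have t : PForm.Taut (.imp (.imp (.var 0) (.imp (.var 1) (.var 2)))
      (.imp (.imp (.var 3) (.var 1))
        (.imp (.imp (.var 3) (.imp (.var 2) (.var 4)))
          (.imp (.var 0) (.imp (.var 3) (.var 4)))))) := by
    intro v; simp only [PForm.eval]
    cases v 0 <;> cases v 1 <;> cases v 2 <;> cases v 3 <;> cases v 4 <;> rfl
  have := CHL.taut (fun q =>
    if q = 0 then Fm.box (Fm.imp A φ) else if q = 1 then Fm.box A
    else if q = 2 then Fm.box φ else if q = 3 then A else φ) t
  exact ((this.mp hk).mp sb).mp h
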